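/- Let G = (V, E) be a hypergraph with a linear order < on the edge set E, and let f be a function assigning to each edge subset A ⊆ E an element f(G, A) of an additive abelian group such that for all A ⊆ E and all e ∈ E \ A: if k(G[A]) = k(G[A ∪ {e}]) then f(G, A) = -f(G, A ∪ {e}). For a broken cycle B ∈ 𝔅(G, <), let ē(B) denote the maximal edge (with respect to <) such that B ∪ {ē(B)} is the edge set of a δ-cycle in G. Let 𝒟' ⊆ 𝔅(G, <) and let B ∈ 𝔅(G, <) satisfy ē(B) ≮ ē(B') for all B' ∈ 𝒟'. Then Σ f(G, A) = 0, where the sum ranges over all A ⊆ E such that B ⊆ A and B' ⊄ A for all B' ∈ 𝒟'. -/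

import Mathlib

open scoped Classical

/-- A hypergraph with vertex type `α` and edges indexed by elements of `ι`
(the indexing allows parallel edges, i.e. a multiset of edges). Every edge is a
nonempty subset of the vertex set. -/
structure IdxHypergraph (α ι : Type*) where
  verts : Finset α
  edges : Finset ι
  inc : ι → Finset α
  inc_nonempty : ∀ i ∈ edges, (inc i).Nonempty
  inc_sub : ∀ i ∈ edges, inc i ⊆ verts

namespace IdxHypergraph

variable {α ι : Type*}

/-- `u` and `v` are connected via a sequence of edges from `E'` in which consecutive
edges share a vertex. -/
def Conn (inc : ι → Finset α) (E' : Finset ι) (u v : α) : Prop :=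
  Relation.ReflTransGen (fun a b => ∃ i ∈ E', a ∈ inc i ∧ b ∈ inc i) u v

/-- The number of connected components of the hypergraph with vertex set `V'` and
edge set `E'` (isolated vertices form their own components). -/
noncomputable def numComponents (inc : ι → Finset α) (V' : Finset α) (E' : Finset ι) : ℕ :=
  (V'.image fun v => V'.filter fun u => Conn inc E' u v).card

/-- `(V₁, E₁)` is a subgraph of `(V₂, E₂)` (w.r.t. the incidence function `inc`). -/
def IsSubgraph (inc : ι → Finset α) (V₁ : Finset α) (E₁ : Finset ι)
    (V₂ : Finset α) (E₂ : Finset ι) : Prop :=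
  V₁ ⊆ V₂ ∧ E₁ ⊆ E₂ ∧ ∀ i ∈ E₁, inc i ⊆ V₁

/-- The hypergraph `(V', E')` is δ-cyclic: it has a subgraph with at least one edge
such that deleting any of its edges does not change the number of connected
components. -/
def IsDeltaCyclic (inc : ι → Finset α) (V' : Finset α) (E' : Finset ι) : Prop :=
  ∃ V'' E'', IsSubgraph inc V'' E'' V' E' ∧ E''.Nonempty ∧
    ∀ i ∈ E'', numComponents inc V'' E'' = numComponents inc V'' (E''.erase i)

/-- The hypergraph `(V', E')` is a δ-cycle: it is δ-cyclic and has no proper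
δ-cyclic subgraph. -/
def IsDeltaCycle (inc : ι → Finset α) (V' : Finset α) (E' : Finset ι) : Prop :=
  IsDeltaCyclic inc V' E' ∧
    ∀ V'' E'', IsSubgraph inc V'' E'' V' E' → (V'', E'') ≠ (V', E') →
      ¬ IsDeltaCyclic inc V'' E''

/-- A proper coloring of `G` with colors in `Fin x`: no edge has all its vertices
mapped to the same color. -/
def ProperColoring (G : IdxHypergraph α ι) (x : ℕ) (φ : G.verts → Fin x) : Prop :=
  ∀ i ∈ G.edges, ¬ ∃ c : Fin x, ∀ v : G.verts, (v : α) ∈ G.inc i → φ v = c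

/-- The number of proper `x`-colorings of `G`, i.e. the value `χ(G, x)` of the
chromatic polynomial. -/
noncomputable def chromaticCount (G : IdxHypergraph α ι) (x : ℕ) : ℕ :=
  Nat.card {φ : G.verts → Fin x // G.ProperColoring x φ}

section Order

variable [LinearOrder ι]

/-- `B` is a broken cycle of `G` w.r.t. the linear order on edges: `B` arises from
deleting the maximal edge of (the edge set of) a δ-cycle that is a subgraph of `G`. -/
def IsBrokenCycle (G : IdxHypergraph α ι) (B : Finset ι) : Prop :=
  ∃ V_C E_C e, IsSubgraph G.inc V_C E_C G.verts G.edges ∧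
    IsDeltaCycle G.inc V_C E_C ∧ e ∈ E_C ∧ (∀ i ∈ E_C, i ≤ e) ∧ B = E_C.erase e

/-- The edge `e` closes the broken cycle `B`: `B ∪ {e}` is the edge set of a
δ-cycle in `G`. -/
def Closes (G : IdxHypergraph α ι) (B : Finset ι) (e : ι) : Prop :=
  ∃ V_C, IsSubgraph G.inc V_C (insert e B) G.verts G.edges ∧
    IsDeltaCycle G.inc V_C (insert e B)

/-- `e` is the minimal edge closing the broken cycle `B`, i.e. `e = e(B)`. -/
def IsMinCloser (G : IdxHypergraph α ι) (B : Finset ι) (e : ι) : Prop :=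
  G.Closes B e ∧ ∀ e', G.Closes B e' → e ≤ e'

/-- `e` is the maximal edge closing the broken cycle `B`, i.e. `e = ē(B)`. -/
def IsMaxCloser (G : IdxHypergraph α ι) (B : Finset ι) (e : ι) : Prop :=
  G.Closes B e ∧ ∀ e', G.Closes B e' → e' ≤ e

/-- `A` contains at least one broken cycle, and
`e = m(A) = min { e(B) : B ∈ 𝔅(G, <), B ⊆ A }`. -/
def IsMinClosingEdge (G : IdxHypergraph α ι) (A : Finset ι) (e : ι) : Prop :=
  (∃ B, G.IsBrokenCycle B ∧ B ⊆ A ∧ G.IsMinCloser B e) ∧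
    ∀ B e', G.IsBrokenCycle B → B ⊆ A → G.IsMinCloser B e' → e ≤ e'

end Order

end IdxHypergraph

/-!
Since `B ∪ {ē(B)}` is a δ-cycle, the vertices of `ē(B)` are already connected through `B`, so for
every `A ⊇ B` adding `ē(B)` does not change the number of components and `f A = -f (A ∪ {ē(B)})`.
Moreover `ē(B) ∉ B`, and `ē(B)` lies in no `B' ∈ 𝒟'`: otherwise `ē(B)` would be smaller than the
maximal edge of the δ-cycle broken by `B'`, hence than `ē(B')`. So toggling `ē(B)` is a
sign-reversing involution on the range of summation.
-/

open Finset

theorem Finset.sum_eq_zero_of_insert_eq_neg {β M : Type*} [DecidableEq β] [AddCommGroup M]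
    {S : Finset (Finset β)} {f : Finset β → M} {e : β}
    (hS : ∀ A, e ∉ A → (A ∈ S ↔ insert e A ∈ S))
    (hf : ∀ A ∈ S, e ∉ A → f A = -f (insert e A)) :
    ∑ A ∈ S, f A = 0 := by
  refine sum_involution (fun A _ => if e ∈ A then A.erase e else insert e A) ?_ ?_ ?_ ?_
  · intro A hA
    split_ifs with he
    · have hA' : A.erase e ∈ S := (hS _ (notMem_erase e A)).2 (by rwa [insert_erase he])
      rw [hf _ hA' (notMem_erase e A), insert_erase he, add_neg_cancel]
    · rw [hf A hA he, neg_add_cancel]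
  · intro A _ _
    split_ifs with he
    · exact (erase_ssubset he).ne
    · exact (ssubset_insert he).ne'
  · intro A hA
    split_ifs with he
    · exact (hS _ (notMem_erase e A)).2 (by rwa [insert_erase he])
    · exact (hS A he).1 hA
  · intro A _
    by_cases he : e ∈ A
    · simp only [if_pos he, if_neg (notMem_erase e A), insert_erase he]
    · simp only [if_neg he, if_pos (mem_insert_self e A), erase_insert he]

theorem Finset.eq_of_card_image_comp_eq {β γ δ : Type*} [DecidableEq γ] [DecidableEq δ]
    {s : Finset β} {f : β → γ} {ψ : γ → δ} (h : #(s.image (ψ ∘ f)) = #(s.image f))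
    {x y : β} (hx : x ∈ s) (hy : y ∈ s) (hxy : ψ (f x) = ψ (f y)) : f x = f y := by
  rw [← image_image] at h
  exact injOn_of_card_image_eq h (mem_image_of_mem f hx) (mem_image_of_mem f hy) hxy

namespace IdxHypergraph

variable {α ι : Type*} {inc : ι → Finset α}

section Connectivity

variable {V : Finset α} {E E' : Finset ι} {u v : α}

lemma Conn.symm (h : Conn inc E u v) : Conn inc E v u := by
  induction h with
  | refl => exact Relation.ReflTransGen.refl
  | tail _ step ih =>
    obtain ⟨i, hi, ha, hb⟩ := step
    exact Relation.ReflTransGen.head ⟨i, hi, hb, ha⟩ ih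

lemma Conn.mono (hE : E ⊆ E') (h : Conn inc E u v) : Conn inc E' u v := by
  refine Relation.ReflTransGen.mono ?_ _ _ h
  rintro a b ⟨i, hi, ha, hb⟩
  exact ⟨i, hE hi, ha, hb⟩

lemma conn_of_mem_inc {i : ι} (hi : i ∈ E) (hu : u ∈ inc i) (hv : v ∈ inc i) :
    Conn inc E u v :=
  Relation.ReflTransGen.single ⟨i, hi, hu, hv⟩

lemma conn_insert_iff [DecidableEq ι] {e : ι}
    (h : ∀ u ∈ inc e, ∀ v ∈ inc e, Conn inc E u v) :
    Conn inc (insert e E) u v ↔ Conn inc E u v := by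
  refine ⟨fun hc => ?_, Conn.mono (subset_insert _ _)⟩
  induction hc with
  | refl => exact Relation.ReflTransGen.refl
  | tail _ step ih =>
    obtain ⟨i, hi, ha, hb⟩ := step
    rcases mem_insert.1 hi with rfl | hi
    · exact ih.trans (h _ ha _ hb)
    · exact ih.tail ⟨i, hi, ha, hb⟩

lemma numComponents_insert_of_conn [DecidableEq ι] {e : ι}
    (h : ∀ u ∈ inc e, ∀ v ∈ inc e, Conn inc E u v) :
    numComponents inc V (insert e E) = numComponents inc V E := by
  unfold numComponents
  simp only [conn_insert_iff h]

noncomputable def component (inc : ι → Finset α) (V : Finset α) (E : Finset ι) (v : α) : Finset α :=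
  V.filter fun u => Conn inc E u v

lemma numComponents_eq_card_image_component :
    numComponents inc V E = #(V.image (component inc V E)) :=
  rfl

lemma component_eq_of_conn (h : Conn inc E u v) : component inc V E u = component inc V E v := by
  ext w
  simp only [component, mem_filter]
  exact and_congr_right fun _ => ⟨fun hw => hw.trans h, fun hw => hw.trans h.symm⟩

/-- The components of `E` refine those of `E'`, so equally many components means equal ones. -/
lemma conn_of_numComponents_eq (hE : E ⊆ E')
    (hnum : numComponents inc V E = numComponents inc V E')
    (hu : u ∈ V) (hv : v ∈ V) (h : Conn inc E' u v) : Conn inc E u v := by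
  set ψ : Finset α → Finset α := fun S => V.filter fun x => ∃ w ∈ S, Conn inc E' x w
  have hψ : ∀ w ∈ V, ψ (component inc V E w) = component inc V E' w := by
    intro w hw
    ext x
    simp only [ψ, component, mem_filter]
    exact and_congr_right fun _ =>
      ⟨fun ⟨_, ⟨_, hy⟩, hxy⟩ => hxy.trans (hy.mono hE),
        fun hxw => ⟨w, ⟨hw, Relation.ReflTransGen.refl⟩, hxw⟩⟩
  have hcard : #(V.image (ψ ∘ component inc V E)) = #(V.image (component inc V E)) := by
    have himg : V.image (ψ ∘ component inc V E) = V.image (component inc V E') := image_congr hψ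
    rw [himg, ← numComponents_eq_card_image_component, ← numComponents_eq_card_image_component,
      hnum]
  have hcomp : component inc V E u = component inc V E v :=
    eq_of_card_image_comp_eq hcard hu hv <| by
      rw [hψ u hu, hψ v hv, component_eq_of_conn h]
  have hv' : v ∈ component inc V E u := hcomp ▸ mem_filter.2 ⟨hv, Relation.ReflTransGen.refl⟩
  exact (mem_filter.1 hv').2.symm

/-- The right-hand side does not depend on the vertex set `V`. -/
lemma numComponents_erase_eq_iff {i : ι} (hi : i ∈ E) (hiV : inc i ⊆ V) :
    numComponents inc V (E.erase i) = numComponents inc V E ↔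
      ∀ u ∈ inc i, ∀ v ∈ inc i, Conn inc (E.erase i) u v := by
  constructor
  · intro hnum u hu v hv
    exact conn_of_numComponents_eq (erase_subset i E) hnum (hiV hu) (hiV hv)
      (conn_of_mem_inc hi hu hv)
  · intro h
    conv_rhs => rw [← insert_erase hi]
    exact (numComponents_insert_of_conn h).symm

end Connectivity

section DeltaCycle

variable {V V' : Finset α} {E E' : Finset ι}

lemma IsDeltaCycle.inc_subset_and_numComponents_erase (h : IsDeltaCycle inc V E) :
    (∀ i ∈ E, inc i ⊆ V) ∧ ∀ i ∈ E, numComponents inc V E = numComponents inc V (E.erase i) := by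
  obtain ⟨⟨V'', E'', hsub, hne, hinv⟩, hmin⟩ := h
  obtain heq | hne' := eq_or_ne (V'', E'') (V, E)
  · obtain ⟨rfl, rfl⟩ := Prod.mk.inj heq
    exact ⟨hsub.2.2, hinv⟩
  · exact absurd ⟨V'', E'', ⟨subset_rfl, subset_rfl, hsub.2.2⟩, hne, hinv⟩
      (hmin V'' E'' hsub hne')

lemma IsDeltaCycle.conn_erase [DecidableEq ι] (h : IsDeltaCycle inc V E) {i : ι} (hi : i ∈ E) :
    ∀ u ∈ inc i, ∀ v ∈ inc i, Conn inc (E.erase i) u v := by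
  obtain ⟨hinc, hinv⟩ := h.inc_subset_and_numComponents_erase
  convert (numComponents_erase_eq_iff hi (hinc i hi)).1 (hinv i hi).symm

/-- A witness of the δ-cyclicity of `(V', E')` can be moved onto the vertex set `V`, where it is
a subgraph of `(V, E)`. -/
lemma IsDeltaCycle.eq_of_isDeltaCyclic (hC : IsDeltaCycle inc V E) (h : IsDeltaCyclic inc V' E')
    (hE : E' ⊆ E) : E' = E := by
  obtain ⟨V₂, E₂, ⟨-, hE₂, hinc₂⟩, hne, hinv⟩ := h
  have hsub : IsSubgraph inc V E₂ V E :=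
    ⟨subset_rfl, hE₂.trans hE, fun i hi =>
      hC.inc_subset_and_numComponents_erase.1 i (hE (hE₂ hi))⟩
  have hcyc : IsDeltaCyclic inc V E₂ := by
    refine ⟨V, E₂, ⟨subset_rfl, subset_rfl, hsub.2.2⟩, hne, fun i hi => ?_⟩
    exact ((numComponents_erase_eq_iff hi (hsub.2.2 i hi)).2
      ((numComponents_erase_eq_iff hi (hinc₂ i hi)).1 (hinv i hi).symm)).symm
  obtain heq | hne' := eq_or_ne (V, E₂) (V, E)
  · exact subset_antisymm hE ((Prod.mk.inj heq).2 ▸ hE₂)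
  · exact absurd hcyc (hC.2 V E₂ hsub hne')

end DeltaCycle

section BrokenCycle

variable [LinearOrder ι] {G : IdxHypergraph α ι} {B : Finset ι} {e : ι}

lemma Closes.mem_edges (h : G.Closes B e) : e ∈ G.edges :=
  h.choose_spec.1.2.1 (mem_insert_self e B)

lemma Closes.notMem (h : G.Closes B e) (hB : G.IsBrokenCycle B) : e ∉ B := by
  intro he
  obtain ⟨_, -, hcyc⟩ := h
  rw [insert_eq_self.2 he] at hcyc
  obtain ⟨_, E_C, m, -, hC, hm, -, rfl⟩ := hB
  exact (erase_ssubset hm).ne (hC.eq_of_isDeltaCyclic hcyc.1 (erase_subset m E_C))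

lemma Closes.numComponents_insert (h : G.Closes B e) (he : e ∉ B) {A : Finset ι} (hBA : B ⊆ A)
    (V : Finset α) : numComponents G.inc V (insert e A) = numComponents G.inc V A := by
  obtain ⟨_, -, hcyc⟩ := h
  have hconn := hcyc.conn_erase (mem_insert_self e B)
  rw [erase_insert he] at hconn
  exact numComponents_insert_of_conn fun u hu v hv => (hconn u hu v hv).mono hBA

lemma Closes.exists_isMaxCloser (h : G.Closes B e) : ∃ e', G.IsMaxCloser B e' ∧ e ≤ e' := by
  set T := G.edges.filter (G.Closes B)
  have heT : e ∈ T := mem_filter.2 ⟨h.mem_edges, h⟩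
  refine ⟨T.max' ⟨e, heT⟩, ⟨(mem_filter.1 (T.max'_mem _)).2, fun e' he' => ?_⟩, T.le_max' e heT⟩
  exact T.le_max' e' (mem_filter.2 ⟨he'.mem_edges, he'⟩)

lemma IsBrokenCycle.exists_isMaxCloser_gt (hB : G.IsBrokenCycle B) (he : e ∈ B) :
    ∃ e', G.IsMaxCloser B e' ∧ e < e' := by
  obtain ⟨V_C, E_C, m, hsub, hC, hm, hmax, rfl⟩ := hB
  have hclose : G.Closes (E_C.erase m) m := by
    refine ⟨V_C, ?_, ?_⟩ <;> rw [insert_erase hm] <;> assumption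
  obtain ⟨e', he', hle⟩ := hclose.exists_isMaxCloser
  have hlt : e < m := lt_of_le_of_ne (hmax e (mem_of_mem_erase he)) (ne_of_mem_erase he)
  exact ⟨e', he', hlt.trans_le hle⟩

end BrokenCycle

end IdxHypergraph

open IdxHypergraph in
/-- Let `f` satisfy the cancellation condition, `D'` a set of broken cycles of `G`,
and `B` a broken cycle whose maximal closing edge `ē(B)` satisfies `ē(B) ≮ ē(B')`
for all `B' ∈ D'`. Then the sum of `f(G, A)` over all `A ⊆ E` with `B ⊆ A` and
`B' ⊄ A` for all `B' ∈ D'` vanishes. -/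
theorem sum_containing_brokenCycle_eq_zero {α ι : Type*} [LinearOrder ι] {M : Type*}
    [AddCommGroup M] (G : IdxHypergraph α ι)
    (f : Finset ι → M)
    (hf : ∀ A ⊆ G.edges, ∀ e ∈ G.edges, e ∉ A →
      numComponents G.inc G.verts A = numComponents G.inc G.verts (insert e A) →
      f A = - f (insert e A))
    (D' : Finset (Finset ι)) (hD' : ∀ B' ∈ D', G.IsBrokenCycle B')
    (B : Finset ι) (hB : G.IsBrokenCycle B)
    (eB : ι) (heB : G.IsMaxCloser B eB)
    (hmax : ∀ B' ∈ D', ∀ e', G.IsMaxCloser B' e' → ¬ eB < e') :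
    ∑ A ∈ G.edges.powerset.filter fun A => B ⊆ A ∧ ∀ B' ∈ D', ¬ B' ⊆ A, f A = 0 := by
  obtain ⟨hclose, -⟩ := heB
  have heB_B : eB ∉ B := hclose.notMem hB
  have heB_D' : ∀ B' ∈ D', eB ∉ B' := fun B' hB' he => by
    obtain ⟨e', he', hlt⟩ := (hD' B' hB').exists_isMaxCloser_gt he
    exact hmax B' hB' e' he' hlt
  refine sum_eq_zero_of_insert_eq_neg (e := eB) (fun A _ => ?_) (fun A hA heA => ?_)
  · have hD'_iff : ∀ B' ∈ D', (¬B' ⊆ insert eB A ↔ ¬B' ⊆ A) := fun B' hB' =>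
      not_congr (subset_insert_iff_of_notMem (heB_D' B' hB'))
    simp only [mem_filter, mem_powerset, insert_subset_iff, hclose.mem_edges, true_and,
      subset_insert_iff_of_notMem heB_B]
    exact and_congr_right' (and_congr_right' (forall₂_congr fun B' hB' => (hD'_iff B' hB').symm))
  · rw [mem_filter, mem_powerset] at hA
    exact hf A hA.1 eB hclose.mem_edges heA (hclose.numComponents_insert heB_B hA.2.1 _).symm
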